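/- Let n be a positive integer and q a complex number with q^j ≠ 1 for all 1 ≤ j ≤ n-1. In the formal power series ring ℂ[[u,v,w]], define Φ(1;q) = Σ_{k,r,s ≥ 0} G(k,r,s;1;q) u^{k-r-s} v^{r-s} w^{s}, where G(k,r,s;1;q) = Σ_{k ∈ I(k,r,s)} L_{k}^{(n)}(1;q) is the sum of the finite q-multiple polylogarithms at t=1 over all indices of weight k, depth r, height s, and G(0,0,0;1;q) = 1. Then Φ(1;q) · Π_{j=1}^{n-1} (1-q^j)(1-u-q^j) = Π_{j=1}^{n-1} P(q^j) holds in ℂ[[u,v,w]], where P(X) = (1-u-X)(1+v-X) + w. -/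

import Mathlib

open Finset

/-- The set of tuples `(m_1,...,m_r)` with `n > m_1 > m_2 > ... > m_r > 0`. -/
def msets (n r : ℕ) : Finset (Fin r → Fin n) :=
  Finset.univ.filter fun m =>
    (∀ i j : Fin r, i < j → m j < m i) ∧ ∀ i, 0 < (m i : ℕ)

/-- The set of tuples `(m_1,...,m_r)` with `n > m_1 ≥ m_2 ≥ ... ≥ m_r > 0`. -/
def msetsStar (n r : ℕ) : Finset (Fin r → Fin n) :=
  Finset.univ.filter fun m =>
    (∀ i j : Fin r, i ≤ j → m j ≤ m i) ∧ ∀ i, 0 < (m i : ℕ)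

/-- The finite multiple harmonic q-series
`z_n(k_1,…,k_r; q) = Σ_{n > m_1 > … > m_r > 0} Π_i q^{(k_i-1)m_i}/[m_i]_q^{k_i}`,
where `[m]_q = (1-q^m)/(1-q)`. -/
noncomputable def z (n : ℕ) {r : ℕ} (k : Fin r → ℕ) (q : ℂ) : ℂ :=
  ∑ m ∈ msets n r,
    ∏ i, q ^ ((k i - 1) * (m i : ℕ)) / ((1 - q ^ (m i : ℕ)) / (1 - q)) ^ (k i)

/-- The star version `z*_n(k; q)`, summed over `n > m_1 ≥ … ≥ m_r > 0`. -/
noncomputable def zstar (n : ℕ) {r : ℕ} (k : Fin r → ℕ) (q : ℂ) : ℂ :=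
  ∑ m ∈ msetsStar n r,
    ∏ i, q ^ ((k i - 1) * (m i : ℕ)) / ((1 - q ^ (m i : ℕ)) / (1 - q)) ^ (k i)

/-- The modified value `z̄_n(k;q) = (1-q)^{-wt(k)} z_n(k;q)`. -/
noncomputable def zbar (n : ℕ) {r : ℕ} (k : Fin r → ℕ) (q : ℂ) : ℂ :=
  (1 - q)⁻¹ ^ (∑ i, k i) * z n k q

/-- The modified star value `z̄*_n(k;q) = (1-q)^{-wt(k)} z*_n(k;q)`. -/
noncomputable def zstarbar (n : ℕ) {r : ℕ} (k : Fin r → ℕ) (q : ℂ) : ℂ :=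
  (1 - q)⁻¹ ^ (∑ i, k i) * zstar n k q

/-- `I(k,r,s)`: the set of indices (tuples of positive integers) of weight `k`,
depth `r` and height `s`. -/
def indexSet3 (k r s : ℕ) : Finset (Fin r → ℕ) :=
  (Finset.Nat.antidiagonalTuple r k).filter fun a =>
    (∀ i, 1 ≤ a i) ∧ (Finset.univ.filter fun i => 2 ≤ a i).card = s

/-- `I(k,r)`: the set of indices of weight `k` and depth `r`. -/
def indexSet2 (k r : ℕ) : Finset (Fin r → ℕ) :=
  (Finset.Nat.antidiagonalTuple r k).filter fun a => ∀ i, 1 ≤ a i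

/-- The one-variable finite q-multiple polylogarithm
`L_{k_1,…,k_r}^{(n)}(t;q) = Σ_{n > m_1 > … > m_r > 0} t^{m_1} / Π_i (1-q^{m_i})^{k_i}`,
with `L_∅(t) = 1`. -/
noncomputable def Lpoly (n : ℕ) {r : ℕ} (k : Fin r → ℕ) (q t : ℂ) : ℂ :=
  ∑ m ∈ msets n r,
    ∏ i : Fin r, (if i.val = 0 then t ^ (m i : ℕ) else 1) / (1 - q ^ (m i : ℕ)) ^ (k i)

/-- The star version `L*_{k_1,…,k_r}^{(n)}(t;q)`, summed over `n > m_1 ≥ … ≥ m_r > 0`. -/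
noncomputable def LpolyStar (n : ℕ) {r : ℕ} (k : Fin r → ℕ) (q t : ℂ) : ℂ :=
  ∑ m ∈ msetsStar n r,
    ∏ i : Fin r, (if i.val = 0 then t ^ (m i : ℕ) else 1) / (1 - q ^ (m i : ℕ)) ^ (k i)

/-- The variables `x, y, z` (resp. `u, v, w`) of `ℂ[[x,y,z]]`. -/
noncomputable def Xv (i : Fin 3) : MvPowerSeries (Fin 3) ℂ := MvPowerSeries.X i

/-- Constant power series. -/
noncomputable def Cc (c : ℂ) : MvPowerSeries (Fin 3) ℂ := MvPowerSeries.C c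

/-- The generating function `Φ(1;q)` in `ℂ[[u,v,w]]`: the coefficient of
`u^{k-r-s} v^{r-s} w^s` is `G(k,r,s;1;q) = Σ_{k ∈ I(k,r,s)} L_k^{(n)}(1;q)`. -/
noncomputable def PhiOne (n : ℕ) (q : ℂ) : MvPowerSeries (Fin 3) ℂ :=
  fun e => ∑ a ∈ indexSet3 (e 0 + e 1 + 2 * e 2) (e 1 + e 2) (e 2), Lpoly n a q 1

/-! Write `a = (1 - q^n)⁻¹`. Splitting off the summation variable `m_1 = n` in
`L^{(n+1)}_k(1; q)` leaves the factor `a^{k_1}` times `L^{(n)}` of the remaining index, while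
all other terms form `L^{(n)}_k(1; q)`. The first entry `c` of an index contributes the monomial `v`
if `c = 1` and `u^{c-2} w` if `c ≥ 2`. Hence `Φ_{n+1} = Φ_n · (1 + a v + a² w / (1 - a u))`,
and multiplying by `(1 - q^n)(1 - q^n - u)` turns the last factor into `P(q^n)`. Induction on
`n` from `Φ_1 = 1` gives the product formula. -/

lemma mem_msets {n r : ℕ} {m : Fin r → Fin n} :
    m ∈ msets n r ↔ StrictAnti m ∧ ∀ i, 0 < (m i : ℕ) := by
  simp [msets, StrictAnti]

lemma msets_eq_empty_of_le_one {n : ℕ} (hn : n ≤ 1) (r : ℕ) : msets n (r + 1) = ∅ := by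
  refine eq_empty_of_forall_notMem fun m hm => ?_
  have := (mem_msets.1 hm).2 0
  omega

lemma Lpoly_of_depth_zero (n : ℕ) (a : Fin 0 → ℕ) (q t : ℂ) : Lpoly n a q t = 1 := by
  simp [Lpoly, msets]

lemma castSucc_comp_mem_msets {n r : ℕ} {m : Fin r → Fin n} :
    Fin.castSucc ∘ m ∈ msets (n + 1) r ↔ m ∈ msets n r := by
  simp [mem_msets, StrictAnti, Fin.castSucc_lt_castSucc_iff]

lemma cons_last_mem_msets {n r : ℕ} (hn : 0 < n) {m : Fin r → Fin n} :
    Fin.cons (Fin.last n) (Fin.castSucc ∘ m) ∈ msets (n + 1) (r + 1) ↔ m ∈ msets n r := by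
  simp only [mem_msets, Fin.forall_fin_succ, Fin.cons_zero, Fin.cons_succ, Fin.val_last,
    Function.comp_apply, Fin.val_castSucc, hn, true_and]
  constructor
  · rintro ⟨hanti, hpos⟩
    exact ⟨fun i j hij => by simpa using hanti (Fin.succ_lt_succ_iff.2 hij), hpos⟩
  · rintro ⟨hanti, hpos⟩
    refine ⟨fun i j hij => ?_, hpos⟩
    obtain ⟨j, rfl⟩ := Fin.exists_succ_eq.2 (Fin.pos_iff_ne_zero.1 (i.zero_le.trans_lt hij))
    cases i using Fin.cases with
    | zero => simp
    | succ i => simpa using hanti (Fin.succ_lt_succ_iff.1 hij)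

lemma apply_le_apply_zero_of_mem_msets {n r : ℕ} {m : Fin (r + 1) → Fin n}
    (hm : m ∈ msets n (r + 1)) (i : Fin (r + 1)) : m i ≤ m 0 :=
  (mem_msets.1 hm).1.antitone (Fin.zero_le i)

lemma apply_ne_last_of_mem_msets {n r : ℕ} {m : Fin (r + 1) → Fin (n + 1)}
    (hm : m ∈ msets (n + 1) (r + 1)) (h0 : m 0 ≠ Fin.last n) (i : Fin (r + 1)) :
    m i ≠ Fin.last n :=
  ((apply_le_apply_zero_of_mem_msets hm i).trans_lt (Fin.lt_last_iff_ne_last.2 h0)).ne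

lemma apply_succ_ne_last_of_mem_msets {n r : ℕ} {m : Fin (r + 1) → Fin (n + 1)}
    (hm : m ∈ msets (n + 1) (r + 1)) (i : Fin r) : m i.succ ≠ Fin.last n :=
  ((mem_msets.1 hm).1 i.succ_pos).trans_le (Fin.le_last _) |>.ne

lemma Lpoly_succ {n r : ℕ} (hn : 0 < n) (a : Fin (r + 1) → ℕ) (q t : ℂ) :
    Lpoly (n + 1) a q t =
      Lpoly n a q t + t ^ n / (1 - q ^ n) ^ a 0 * Lpoly n (Fin.tail a) q 1 := by
  unfold Lpoly
  rw [← sum_filter_not_add_sum_filter _ (fun m => m 0 = Fin.last n), mul_sum]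
  congr 1
  · refine (sum_bij' (fun m _ => Fin.castSucc ∘ m)
      (fun m hm i => (m i).castPred (apply_ne_last_of_mem_msets (mem_filter.1 hm).1
        (mem_filter.1 hm).2 i))
      (fun m hm => by simpa [castSucc_comp_mem_msets] using hm)
      (fun m hm => castSucc_comp_mem_msets.1 (by convert (mem_filter.1 hm).1; ext; simp))
      (fun m _ => by ext; simp) (fun m _ => by ext; simp) (fun m _ => by simp)).symm
  · have hcons : ∀ m (hm : m ∈ {m ∈ msets (n + 1) (r + 1) | m 0 = Fin.last n}),
        Fin.cons (Fin.last n) (Fin.castSucc ∘ fun i => (m i.succ).castPred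
          (apply_succ_ne_last_of_mem_msets (mem_filter.1 hm).1 i)) = m := by
      intro m hm
      ext i
      cases i using Fin.cases with
      | zero => simp [(mem_filter.1 hm).2]
      | succ i => simp
    refine (sum_bij' (fun m _ => Fin.cons (Fin.last n) (Fin.castSucc ∘ m))
      (fun m hm i => (m i.succ).castPred (apply_succ_ne_last_of_mem_msets (mem_filter.1 hm).1 i))
      (fun m hm => by simpa [cons_last_mem_msets hn] using hm)
      (fun m hm => (cons_last_mem_msets hn).1 (by rw [hcons m hm]; exact (mem_filter.1 hm).1))
      (fun m _ => by ext; simp) hcons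
      (fun m _ => by simp [Fin.prod_univ_succ, Fin.tail, div_eq_mul_inv])).symm

lemma mem_indexSet3 {k r s : ℕ} {a : Fin r → ℕ} :
    a ∈ indexSet3 k r s ↔
      ∑ i, a i = k ∧ (∀ i, 1 ≤ a i) ∧ #{i | 2 ≤ a i} = s := by
  simp [indexSet3, Nat.mem_antidiagonalTuple]

lemma indexSet3_eq_empty_of_lt_height {k r s : ℕ} (h : r < s) : indexSet3 k r s = ∅ := by
  refine eq_empty_of_forall_notMem fun a ha => ?_
  have := card_le_univ (α := Fin r) {i | 2 ≤ a i}
  simp only [Fintype.card_fin, (mem_indexSet3.1 ha).2.2] at this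
  omega

lemma indexSet3_eq_empty_of_weight_lt {k r s : ℕ} (h : k < r + s) : indexSet3 k r s = ∅ := by
  refine eq_empty_of_forall_notMem fun a ha => ?_
  obtain ⟨hk, hpos, hs⟩ := mem_indexSet3.1 ha
  have : ∑ i, (1 + if 2 ≤ a i then 1 else 0) ≤ ∑ i, a i :=
    sum_le_sum fun i _ => by have := hpos i; split_ifs <;> omega
  rw [sum_add_distrib, ← card_filter, hs, hk] at this
  simp at this
  omega

lemma cons_mem_indexSet3 {c k r s : ℕ} {b : Fin r → ℕ} :
    Fin.cons c b ∈ indexSet3 k (r + 1) s ↔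
      1 ≤ c ∧ c ≤ k ∧ (if 2 ≤ c then 1 else 0) ≤ s ∧
        b ∈ indexSet3 (k - c) r (s - if 2 ≤ c then 1 else 0) := by
  simp only [mem_indexSet3, Fin.sum_univ_succ, Fin.forall_fin_succ, card_filter, Fin.cons_zero,
    Fin.cons_succ]
  by_cases hb : ∀ i, 1 ≤ b i
  · simp only [hb, implies_true, true_and, and_true]
    split_ifs <;> omega
  · simp [hb]

lemma sum_indexSet3_succ {M : Type*} [AddCommMonoid M] {r : ℕ} (k s : ℕ)
    (F : ℕ → (Fin r → ℕ) → M) :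
    ∑ a ∈ indexSet3 k (r + 1) s, F (a 0) (Fin.tail a) =
      ∑ c ∈ Icc 1 k, if (if 2 ≤ c then 1 else 0) ≤ s then
        ∑ b ∈ indexSet3 (k - c) r (s - if 2 ≤ c then 1 else 0), F c b else 0 := by
  rw [← sum_filter, sum_sigma']
  refine sum_bij' (fun a _ => ⟨a 0, Fin.tail a⟩) (fun p _ => Fin.cons p.1 p.2) ?_ ?_ ?_ ?_ ?_
  · intro a ha
    rw [← Fin.cons_self_tail a, cons_mem_indexSet3] at ha
    simp_all
  · rintro ⟨c, b⟩ hp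
    simp only [mem_sigma, mem_filter, mem_Icc] at hp
    exact cons_mem_indexSet3.2 ⟨hp.1.1.1, hp.1.1.2, hp.1.2, hp.2⟩
  · intro a _
    exact Fin.cons_self_tail a
  · rintro ⟨c, b⟩ _
    simp
  · intro a _
    rfl

noncomputable def G (n : ℕ) (q : ℂ) (k r s : ℕ) : ℂ :=
  ∑ a ∈ indexSet3 k r s, Lpoly n a q 1

lemma G_of_depth_zero (n : ℕ) (q : ℂ) (k s : ℕ) :
    G n q k 0 s = if k = 0 ∧ s = 0 then 1 else 0 := by
  rcases k with _ | k
  · simp [G, indexSet3, Lpoly_of_depth_zero, eq_comm, apply_ite]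
  · simp [G, indexSet3]

lemma G_eq_zero_of_lt_height {n : ℕ} {q : ℂ} {k r s : ℕ} (h : r < s) : G n q k r s = 0 := by
  simp [G, indexSet3_eq_empty_of_lt_height h]

lemma G_eq_zero_of_weight_lt {n : ℕ} {q : ℂ} {k r s : ℕ} (h : k < r + s) :
    G n q k r s = 0 := by
  simp [G, indexSet3_eq_empty_of_weight_lt h]

lemma G_succ {n : ℕ} (hn : 0 < n) (q : ℂ) (k r s : ℕ) :
    G (n + 1) q k (r + 1) s = G n q k (r + 1) s +
      ∑ c ∈ Icc 1 k, if (if 2 ≤ c then 1 else 0) ≤ s then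
        (1 - q ^ n)⁻¹ ^ c * G n q (k - c) r (s - if 2 ≤ c then 1 else 0) else 0 := by
  simp only [G, Lpoly_succ hn, sum_add_distrib, one_pow, one_div, ← inv_pow]
  rw [sum_indexSet3_succ k s fun c b => (1 - q ^ n)⁻¹ ^ c * Lpoly n b q 1]
  simp only [mul_sum]

noncomputable def phiCoeff (n : ℕ) (q : ℂ) (x y z : ℕ) : ℂ :=
  G n q (x + y + 2 * z) (y + z) z

lemma sum_Icc_two_G_eq_sum_phiCoeff (n : ℕ) (q a : ℂ) (x y z : ℕ) :
    ∑ c ∈ Icc 2 (x + y + 2 * (z + 1)), a ^ c * G n q (x + y + 2 * (z + 1) - c) (y + z) z =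
      ∑ j ∈ range (x + 1), a ^ (j + 2) * phiCoeff n q (x - j) y z := by
  set f := fun c => a ^ c * G n q (x + y + 2 * (z + 1) - c) (y + z) z
  have hinj : Set.InjOn (· + 2) (range (x + 1) : Set ℕ) := fun _ _ _ _ h => by simpa using h
  calc ∑ c ∈ Icc 2 (x + y + 2 * (z + 1)), f c
      = ∑ c ∈ (range (x + 1)).image (· + 2), f c := by
        refine (sum_subset (fun c hc => ?_) (fun c hc hc' => ?_)).symm
        · obtain ⟨j, hj, rfl⟩ := mem_image.1 hc
          simp only [mem_Icc, mem_range] at hj ⊢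
          omega
        · have : x + 2 < c := by
            by_contra! h
            exact hc' (mem_image.2 ⟨c - 2, mem_range.2 (by omega), by simp at hc ⊢; omega⟩)
          have hG : G n q (x + y + 2 * (z + 1) - c) (y + z) z = 0 :=
            G_eq_zero_of_weight_lt (by have := mem_Icc.1 hc; omega)
          simp [f, hG]
    _ = ∑ j ∈ range (x + 1), a ^ (j + 2) * phiCoeff n q (x - j) y z := by
        rw [sum_image hinj]
        refine sum_congr rfl fun j hj => ?_
        simp only [f, phiCoeff, mem_range] at hj ⊢
        congr 2
        omega

lemma phiCoeff_succ {n : ℕ} (hn : 0 < n) (q : ℂ) (x y z : ℕ) :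
    phiCoeff (n + 1) q x y z = phiCoeff n q x y z +
      ((if y = 0 then 0 else (1 - q ^ n)⁻¹ * phiCoeff n q x (y - 1) z) +
        if z = 0 then 0 else ∑ j ∈ range (x + 1),
          (1 - q ^ n)⁻¹ ^ (j + 2) * phiCoeff n q (x - j) y (z - 1)) := by
  rcases hr : y + z with _ | r
  · obtain ⟨rfl, rfl⟩ : y = 0 ∧ z = 0 := by omega
    simp [phiCoeff, G_of_depth_zero]
  have hk : 1 ≤ x + y + 2 * z := by omega
  rw [phiCoeff, phiCoeff, hr, G_succ hn, ← insert_Icc_add_one_left_eq_Icc hk,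
    sum_insert (by simp)]
  congr 2
  · simp only [Nat.not_ofNat_le_one, if_false, zero_le, if_true, pow_one, Nat.sub_zero]
    rcases y with _ | y
    · simp [G_eq_zero_of_lt_height (by omega : r < z)]
    · simp only [phiCoeff]
      congr 2 <;> omega
  · rcases z with _ | z
    · exact sum_eq_zero fun c hc => if_neg (by simp at hc ⊢; omega)
    · rw [← sum_Icc_two_G_eq_sum_phiCoeff]
      refine sum_congr rfl fun c hc => ?_
      rw [if_pos (by split_ifs <;> omega)]
      congr 3 <;> simp at hc ⊢ <;> omega

lemma sum_range_succ_pow_mul_sub {R : Type*} [CommSemiring R] (a : R) (f : ℕ → R) (x : ℕ) :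
    ∑ j ∈ range (x + 2), a ^ (j + 2) * f (x + 1 - j) =
      a ^ 2 * f (x + 1) + a * ∑ j ∈ range (x + 1), a ^ (j + 2) * f (x - j) := by
  rw [sum_range_succ', mul_sum]
  simp only [zero_add, Nat.sub_zero, Nat.add_sub_add_right]
  rw [add_comm]
  congr 1
  exact sum_congr rfl fun j _ => by ring

lemma phiCoeff_succ_sub_mul {n : ℕ} (hn : 0 < n) (q : ℂ) (x y z : ℕ) :
    phiCoeff (n + 1) q (x + 1) y z - (1 - q ^ n)⁻¹ * phiCoeff (n + 1) q x y z =
      phiCoeff n q (x + 1) y z - (1 - q ^ n)⁻¹ * phiCoeff n q x y z +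
        ((if y = 0 then 0 else (1 - q ^ n)⁻¹ *
            (phiCoeff n q (x + 1) (y - 1) z - (1 - q ^ n)⁻¹ * phiCoeff n q x (y - 1) z)) +
          if z = 0 then 0 else (1 - q ^ n)⁻¹ ^ 2 * phiCoeff n q (x + 1) y (z - 1)) := by
  have h := sum_range_succ_pow_mul_sub (1 - q ^ n)⁻¹ (fun t => phiCoeff n q t y (z - 1)) x
  rw [phiCoeff_succ hn, phiCoeff_succ hn, h]
  split_ifs <;> ring

open MvPowerSeries in
lemma coeff_mul_X_eq {σ R : Type*} [CommSemiring R] [DecidableEq σ] (φ : MvPowerSeries σ R)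
    (i : σ) (e : σ →₀ ℕ) :
    coeff e (φ * X i) = if e i = 0 then 0 else coeff (e - Finsupp.single i 1) φ := by
  rw [X_def, coeff_mul_monomial, mul_one]
  split_ifs with h h' <;> simp_all [Finsupp.single_le_iff, Nat.one_le_iff_ne_zero]

lemma coeff_PhiOne (n : ℕ) (q : ℂ) (e : Fin 3 →₀ ℕ) :
    MvPowerSeries.coeff e (PhiOne n q) = phiCoeff n q (e 0) (e 1) (e 2) := rfl

open MvPowerSeries in
lemma PhiOne_succ_mul_one_sub {n : ℕ} (hn : 0 < n) (q : ℂ) :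
    PhiOne (n + 1) q * (1 - C (1 - q ^ n)⁻¹ * X 0) =
      PhiOne n q * ((1 - C (1 - q ^ n)⁻¹ * X 0) * (1 + C (1 - q ^ n)⁻¹ * X 1) +
        C (1 - q ^ n)⁻¹ ^ 2 * X 2) := by
  have key : PhiOne (n + 1) q - C (1 - q ^ n)⁻¹ * (PhiOne (n + 1) q * X 0) =
      PhiOne n q - C (1 - q ^ n)⁻¹ * (PhiOne n q * X 0) +
        C (1 - q ^ n)⁻¹ * (PhiOne n q * X 1) -
        C (1 - q ^ n)⁻¹ * (C (1 - q ^ n)⁻¹ * (PhiOne n q * X 1 * X 0)) +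
        C (1 - q ^ n)⁻¹ * (C (1 - q ^ n)⁻¹ * (PhiOne n q * X 2)) := by
    ext e
    simp only [map_sub, map_add, coeff_C_mul, coeff_mul_X_eq, coeff_PhiOne, Finsupp.tsub_apply,
      Finsupp.single_apply, Fin.isValue, Fin.reduceEq, if_true, if_false, tsub_zero]
    generalize e 0 = x, e 1 = y, e 2 = z
    rcases x with _ | x
    · simp only [phiCoeff_succ hn, zero_add, sum_range_one, if_true]
      split_ifs <;> ring
    · simp only [Nat.add_one_ne_zero, if_false, Nat.add_sub_cancel]
      rw [phiCoeff_succ_sub_mul hn]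
      split_ifs <;> ring
  linear_combination key

lemma Lpoly_of_le_one {n r : ℕ} (hn : n ≤ 1) (a : Fin (r + 1) → ℕ) (q t : ℂ) :
    Lpoly n a q t = 0 := by
  simp [Lpoly, msets_eq_empty_of_le_one hn]

lemma PhiOne_of_le_one {n : ℕ} (hn : n ≤ 1) (q : ℂ) : PhiOne n q = 1 := by
  ext e
  have he : e = 0 ↔ e 0 = 0 ∧ e 1 = 0 ∧ e 2 = 0 := by
    simp [Finsupp.ext_iff, Fin.forall_fin_succ]
  rw [coeff_PhiOne, MvPowerSeries.coeff_one, phiCoeff]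
  rcases h : e 1 + e 2 with _ | r
  · rw [G_of_depth_zero]
    exact if_congr (by rw [he]; omega) rfl rfl
  · rw [if_neg (by rw [he]; omega)]
    exact sum_eq_zero fun a _ => Lpoly_of_le_one hn a q 1

open MvPowerSeries in
lemma PhiOne_succ_mul {n : ℕ} (hn : 0 < n) {q : ℂ} (hq : q ^ n ≠ 1) :
    PhiOne (n + 1) q * (Cc (1 - q ^ n) * (1 - Xv 0 - Cc (q ^ n))) =
      PhiOne n q * ((1 - Xv 0 - Cc (q ^ n)) * (1 + Xv 1 - Cc (q ^ n)) + Xv 2) := by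
  have hb : C (1 - q ^ n) * C (1 - q ^ n)⁻¹ = (1 : MvPowerSeries (Fin 3) ℂ) := by
    rw [← map_mul, mul_inv_cancel₀ (sub_ne_zero.2 hq.symm), map_one]
  have hC : Cc (q ^ n) = 1 - C (1 - q ^ n) := by simp [Cc]
  rw [hC, Xv, Xv, Xv, Cc]
  set B : MvPowerSeries (Fin 3) ℂ := C (1 - q ^ n)
  set A : MvPowerSeries (Fin 3) ℂ := C (1 - q ^ n)⁻¹
  -- `B²` times the identity with `A = B⁻¹`, cleared of `A` by `B * A = 1`
  linear_combination B ^ 2 * PhiOne_succ_mul_one_sub hn q +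
    (B * PhiOne (n + 1) q * X 0 - B * PhiOne n q * X 0 + B * PhiOne n q * X 1 -
      (B * A + 1) * (PhiOne n q * X 0 * X 1 - PhiOne n q * X 2)) * hb

theorem PhiOne_eval_general (n : ℕ) (q : ℂ)
    (hq : ∀ j : ℕ, 1 ≤ j → j ≤ n - 1 → q ^ j ≠ 1) :
    PhiOne n q * ∏ j ∈ Finset.Ico 1 n, (Cc (1 - q ^ j) * (1 - Xv 0 - Cc (q ^ j))) =
      ∏ j ∈ Finset.Ico 1 n,
        ((1 - Xv 0 - Cc (q ^ j)) * (1 + Xv 1 - Cc (q ^ j)) + Xv 2) := by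
  induction n with
  | zero => simp [PhiOne_of_le_one]
  | succ n ih =>
    rcases Nat.eq_zero_or_pos n with rfl | hn
    · simp [PhiOne_of_le_one]
    rw [prod_Ico_succ_top (by omega), prod_Ico_succ_top (by omega),
      ← ih fun j hj hjn => hq j hj (by omega)]
    linear_combination (∏ j ∈ Ico 1 n, (Cc (1 - q ^ j) * (1 - Xv 0 - Cc (q ^ j)))) *
      PhiOne_succ_mul hn (hq n hn (by omega))

/-- `Φ(1;q)·Π_{j=1}^{n-1}(1-q^j)(1-u-q^j) = Π_{j=1}^{n-1} P(q^j)`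
in `ℂ[[u,v,w]]`, where `P(X) = (1-u-X)(1+v-X)+w`. -/
theorem PhiOne_eval (n : ℕ) (hn : 0 < n) (q : ℂ)
    (hq : ∀ j : ℕ, 1 ≤ j → j ≤ n - 1 → q ^ j ≠ 1) :
    PhiOne n q * ∏ j ∈ Finset.Ico 1 n, (Cc (1 - q ^ j) * (1 - Xv 0 - Cc (q ^ j))) =
      ∏ j ∈ Finset.Ico 1 n,
        ((1 - Xv 0 - Cc (q ^ j)) * (1 + Xv 1 - Cc (q ^ j)) + Xv 2) :=
  PhiOne_eval_general n q hq
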